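/- arXiv:1502.03155 — 6 statements merged into one kernel-verified Lean document; each statement's English description precedes it below -/
import Mathlib

section
/- For penalty levels λ₁ ≥ 0 and λ₂ > 0, the minimizer (β*, δ*) of (β,δ) ↦ (z − β − δ)² + λ₂β² + λ₁|δ| over ℝ² satisfies β* + δ* = (1−k)z + k·sign(z)·max(|z| − λ₁/(2k), 0), where k = λ₂/(1+λ₂). -/
/-! Minimizing first in `β` is a ridge regression: `βs = (z - δs)/(1 + lam2)`, and the profiled
objective in `δ` is `k (z - δ)² + lam1 |δ|`. That is a lasso problem, whose unique minimizer is
the soft threshold of `z` at level `lam1/(2k)`; finally `βs + δs = (1 - k) z + k δs`. -/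

theorem sq_sub_add_mul_sq_eq {K : Type*} [Field K] (r β lam : K) (h : 1 + lam ≠ 0) :
    (r - β) ^ 2 + lam * β ^ 2
      = (1 + lam) * (β - r / (1 + lam)) ^ 2 + lam / (1 + lam) * r ^ 2 := by
  field_simp
  ring

theorem eq_div_of_forall_sq_sub_add_mul_sq_le {r β₀ lam : ℝ} (hlam : 0 < 1 + lam)
    (hmin : ∀ β, (r - β₀) ^ 2 + lam * β₀ ^ 2 ≤ (r - β) ^ 2 + lam * β ^ 2) :
    β₀ = r / (1 + lam) := by
  have h := hmin (r / (1 + lam))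
  rw [sq_sub_add_mul_sq_eq r β₀ lam hlam.ne', sq_sub_add_mul_sq_eq r _ lam hlam.ne',
    sub_self, zero_pow two_ne_zero, mul_zero, zero_add] at h
  have hsq : (β₀ - r / (1 + lam)) ^ 2 = 0 :=
    le_antisymm (nonpos_of_mul_nonpos_right (by linarith) hlam) (sq_nonneg _)
  exact sub_eq_zero.mp (pow_eq_zero_iff two_ne_zero |>.mp hsq)

noncomputable def softThreshold (t z : ℝ) : ℝ := Real.sign z * max (|z| - t) 0

theorem sq_sub_softThreshold_add_le {t : ℝ} (ht : 0 ≤ t) (z δ : ℝ) :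
    (z - softThreshold t z) ^ 2 + 2 * t * |softThreshold t z| + (δ - softThreshold t z) ^ 2
      ≤ (z - δ) ^ 2 + 2 * t * |δ| := by
  unfold softThreshold
  rcases le_or_gt |z| t with hle | hgt
  · rw [max_eq_right (by linarith), mul_zero]
    have : z * δ ≤ t * |δ| :=
      (le_abs_self _).trans (abs_mul z δ ▸ mul_le_mul_of_nonneg_right hle (abs_nonneg δ))
    simp only [sub_zero, abs_zero, mul_zero, add_zero]
    nlinarith
  · rcases lt_trichotomy z 0 with hneg | hzero | hpos
    · rw [abs_of_neg hneg] at hgt ⊢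
      rw [Real.sign_of_neg hneg, max_eq_left (by linarith), abs_of_nonpos (by linarith)]
      nlinarith [neg_abs_le δ]
    · simp [hzero] at hgt
      linarith
    · rw [abs_of_pos hpos] at hgt ⊢
      rw [Real.sign_of_pos hpos, max_eq_left (by linarith), abs_of_nonneg (by linarith)]
      nlinarith [le_abs_self δ]

theorem eq_softThreshold_of_forall_le {t z δ₀ : ℝ} (ht : 0 ≤ t)
    (hmin : ∀ δ, (z - δ₀) ^ 2 + 2 * t * |δ₀| ≤ (z - δ) ^ 2 + 2 * t * |δ|) :
    δ₀ = softThreshold t z := by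
  have h := (sq_sub_softThreshold_add_le ht z δ₀).trans (hmin (softThreshold t z))
  have hsq : (δ₀ - softThreshold t z) ^ 2 = 0 := le_antisymm (by linarith) (sq_nonneg _)
  exact sub_eq_zero.mp (pow_eq_zero_iff two_ne_zero |>.mp hsq)

/-- For penalty levels `lam1 ≥ 0` and `lam2 > 0`, any minimizer `(β*, δ*)` of
`(β,δ) ↦ (z − β − δ)² + lam2 β² + lam1 |δ|` over `ℝ²` satisfies
`β* + δ* = (1−k) z + k ⬝ sign z ⬝ max (|z| − lam1/(2k)) 0` with `k = lam2/(1+lam2)`. -/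
theorem lava_one_dim_solution (z lam1 lam2 : ℝ) (hlam1 : 0 ≤ lam1) (hlam2 : 0 < lam2)
    (k : ℝ) (hk : k = lam2 / (1 + lam2)) (βs δs : ℝ)
    (hmin : ∀ β δ : ℝ,
      (z - βs - δs)^2 + lam2 * βs^2 + lam1 * |δs| ≤ (z - β - δ)^2 + lam2 * β^2 + lam1 * |δ|) :
    βs + δs = (1 - k) * z + k * Real.sign z * max (|z| - lam1 / (2 * k)) 0 := by
  have h1 : 0 < 1 + lam2 := by linarith
  have hkpos : 0 < k := hk ▸ by positivity
  have hobj : ∀ β δ, (z - β - δ) ^ 2 + lam2 * β ^ 2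
      = (1 + lam2) * (β - (z - δ) / (1 + lam2)) ^ 2 + k * (z - δ) ^ 2 := fun β δ => by
    rw [hk, ← sq_sub_add_mul_sq_eq _ _ _ h1.ne', sub_right_comm]
  have hβ : βs = (z - δs) / (1 + lam2) :=
    eq_div_of_forall_sq_sub_add_mul_sq_le h1 fun β => by
      simpa only [sub_right_comm z] using add_le_add_iff_right _ |>.mp (hmin β δs)
  have hδ : δs = softThreshold (lam1 / (2 * k)) z := by
    refine eq_softThreshold_of_forall_le (by positivity) fun δ => ?_
    have h := hmin ((z - δ) / (1 + lam2)) δ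
    rw [hobj, hobj, ← hβ, sub_self, sub_self, zero_pow two_ne_zero, mul_zero, zero_add,
      zero_add] at h
    have h2k : 2 * (lam1 / (2 * k)) = lam1 / k := by field_simp
    rw [h2k, ← mul_le_mul_iff_of_pos_left hkpos]
    field_simp
    linarith
  rw [hβ, hδ, softThreshold, hk]
  field_simp
  ring
end

section
/- If Z ~ N(θ, σ²) and F(z) = hz + d for z > w, F(z) = ez + m for |z| ≤ w, F(z) = fz + g for z < −w, then E[F(Z)²] = [σ²(h²w + h²θ + 2dh) − σ²(e²w + e²θ + 2me)]φ(w) + [σ²(−e²w + e²θ + 2me) − σ²(−f²w + f²θ + 2gf)]φ(−w) + ((hθ+d)² + h²σ²)P(Z > w) + ((fθ+g)² + f²σ²)P(Z < −w) + ((eθ+m)² + e²σ²)P(|Z| < w), where φ is the density of Z. -/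
open MeasureTheory ProbabilityTheory

/-!
Writing `φ` for the `N(μ, v)` density, `v φ' = (μ - x) φ`, so
`x ↦ -v (α² x + α² μ + 2 α β) φ(x)` is a primitive of `((α x + β)² - E[(α Z + β)²]) φ(x)`.
The primitive and its derivative are integrable, hence the primitive vanishes at `±∞`, and the
fundamental theorem of calculus evaluates the second moment of `α Z + β` over each of the three
intervals on which `F` is affine.
-/

open Set Filter NNReal Topology

namespace ProbabilityTheory

variable {μ : ℝ} {v : ℝ≥0}

lemma hasDerivAt_gaussianPDFReal (x : ℝ) :
    HasDerivAt (gaussianPDFReal μ v) ((μ - x) / v * gaussianPDFReal μ v x) x := by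
  have hexponent : HasDerivAt (fun y ↦ -(y - μ) ^ 2 / (2 * v)) ((μ - x) / v) x :=
    ((((hasDerivAt_id' x).sub_const μ).fun_pow 2).fun_neg.div_const (2 * (v : ℝ))).congr_deriv
      (by ring)
  have hpdf := hexponent.exp.const_mul (√(2 * Real.pi * v))⁻¹
  rw [← gaussianPDFReal_def] at hpdf
  exact hpdf.congr_deriv (by rw [gaussianPDFReal]; ring)

lemma _root_.MeasureTheory.Integrable.mul_gaussianPDFReal {f : ℝ → ℝ}
    (hf : Integrable f (gaussianReal μ v)) :
    Integrable (fun x ↦ f x * gaussianPDFReal μ v x) := by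
  rcases eq_or_ne v 0 with rfl | hv
  · simp
  rw [gaussianReal_of_var_ne_zero μ hv, integrable_withDensity_iff_integrable_smul'
    (measurable_gaussianPDF μ v) (ae_of_all _ fun _ ↦ gaussianPDF_lt_top)] at hf
  simpa [toReal_gaussianPDF, mul_comm] using hf

lemma memLp_affine_gaussianReal (p : ℝ≥0) (α β : ℝ) :
    MemLp (fun x ↦ α * x + β) p (gaussianReal μ v) :=
  ((memLp_id_gaussianReal p).const_mul α).add (memLp_const β)

lemma integrable_affine_sq_sub_mul_gaussianPDFReal (α β c : ℝ) :
    Integrable (fun x ↦ ((α * x + β) ^ 2 - c) * gaussianPDFReal μ v x) :=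
  ((memLp_affine_gaussianReal 2 α β).integrable_sq.sub (integrable_const c)).mul_gaussianPDFReal

lemma toReal_gaussianReal_apply (hv : v ≠ 0) (s : Set ℝ) :
    (gaussianReal μ v s).toReal = ∫ x in s, gaussianPDFReal μ v x := by
  rw [gaussianReal_apply_eq_integral μ hv, ENNReal.toReal_ofReal
    (setIntegral_nonneg_of_ae (ae_of_all _ fun _ ↦ gaussianPDFReal_nonneg μ v _))]

noncomputable def gaussianSqPrimitive (μ : ℝ) (v : ℝ≥0) (α β x : ℝ) : ℝ :=
  -(v * (α ^ 2 * x + α ^ 2 * μ + 2 * α * β)) * gaussianPDFReal μ v x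

lemma hasDerivAt_gaussianSqPrimitive (hv : v ≠ 0) (α β x : ℝ) :
    HasDerivAt (gaussianSqPrimitive μ v α β)
      (((α * x + β) ^ 2 - ((α * μ + β) ^ 2 + α ^ 2 * v)) * gaussianPDFReal μ v x) x := by
  have hlin : HasDerivAt (fun y ↦ -(v * (α ^ 2 * y + α ^ 2 * μ + 2 * α * β))) (-(v * α ^ 2)) x := by
    simpa using ((((hasDerivAt_id' x).const_mul (α ^ 2)).add_const (α ^ 2 * μ)).add_const
      (2 * α * β)).const_mul (v : ℝ) |>.fun_neg
  refine (hlin.mul (hasDerivAt_gaussianPDFReal x)).congr_deriv ?_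
  have : (v : ℝ) ≠ 0 := by exact_mod_cast hv
  field_simp
  ring

lemma integrable_gaussianSqPrimitive (α β : ℝ) : Integrable (gaussianSqPrimitive μ v α β) :=
  ((memLp_affine_gaussianReal 1 (-(v * α ^ 2)) (-(v * (α ^ 2 * μ + 2 * α * β)))).integrable
    le_rfl).mul_gaussianPDFReal.congr
      (ae_of_all _ fun x ↦ by simp only [gaussianSqPrimitive]; ring_nf)

lemma tendsto_gaussianSqPrimitive_atTop (hv : v ≠ 0) (α β : ℝ) :
    Tendsto (gaussianSqPrimitive μ v α β) atTop (𝓝 0) :=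
  tendsto_zero_of_hasDerivAt_of_integrableOn_Ioi (a := 0)
    (fun x _ ↦ hasDerivAt_gaussianSqPrimitive hv α β x)
    (integrable_affine_sq_sub_mul_gaussianPDFReal α β _).integrableOn
    (integrable_gaussianSqPrimitive α β).integrableOn

lemma tendsto_gaussianSqPrimitive_atBot (hv : v ≠ 0) (α β : ℝ) :
    Tendsto (gaussianSqPrimitive μ v α β) atBot (𝓝 0) :=
  tendsto_zero_of_hasDerivAt_of_integrableOn_Iic (a := 0)
    (fun x _ ↦ hasDerivAt_gaussianSqPrimitive hv α β x)
    (integrable_affine_sq_sub_mul_gaussianPDFReal α β _).integrableOn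
    (integrable_gaussianSqPrimitive α β).integrableOn

lemma setIntegral_affine_sq_mul_gaussianPDFReal (α β : ℝ) (s : Set ℝ) :
    ∫ x in s, (α * x + β) ^ 2 * gaussianPDFReal μ v x =
      ((α * μ + β) ^ 2 + α ^ 2 * v) * (∫ x in s, gaussianPDFReal μ v x) +
        ∫ x in s, ((α * x + β) ^ 2 - ((α * μ + β) ^ 2 + α ^ 2 * v)) * gaussianPDFReal μ v x := by
  rw [← integral_const_mul, ← integral_add ((integrable_gaussianPDFReal μ v).const_mul _).integrableOn
    (integrable_affine_sq_sub_mul_gaussianPDFReal α β _).integrableOn]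
  congr with x
  ring

lemma setIntegral_Ioi_affine_sq_mul_gaussianPDFReal (hv : v ≠ 0) (α β a : ℝ) :
    ∫ x in Ioi a, (α * x + β) ^ 2 * gaussianPDFReal μ v x =
      ((α * μ + β) ^ 2 + α ^ 2 * v) * (∫ x in Ioi a, gaussianPDFReal μ v x) -
        gaussianSqPrimitive μ v α β a := by
  rw [setIntegral_affine_sq_mul_gaussianPDFReal, integral_Ioi_of_hasDerivAt_of_tendsto'
    (fun x _ ↦ hasDerivAt_gaussianSqPrimitive hv α β x)
    (integrable_affine_sq_sub_mul_gaussianPDFReal α β _).integrableOn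
    (tendsto_gaussianSqPrimitive_atTop hv α β)]
  ring

lemma setIntegral_Iic_affine_sq_mul_gaussianPDFReal (hv : v ≠ 0) (α β b : ℝ) :
    ∫ x in Iic b, (α * x + β) ^ 2 * gaussianPDFReal μ v x =
      ((α * μ + β) ^ 2 + α ^ 2 * v) * (∫ x in Iic b, gaussianPDFReal μ v x) +
        gaussianSqPrimitive μ v α β b := by
  rw [setIntegral_affine_sq_mul_gaussianPDFReal, integral_Iic_of_hasDerivAt_of_tendsto'
    (fun x _ ↦ hasDerivAt_gaussianSqPrimitive hv α β x)
    (integrable_affine_sq_sub_mul_gaussianPDFReal α β _).integrableOn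
    (tendsto_gaussianSqPrimitive_atBot hv α β), sub_zero]

lemma setIntegral_Ioc_affine_sq_mul_gaussianPDFReal (hv : v ≠ 0) (α β : ℝ) {a b : ℝ}
    (hab : a ≤ b) :
    ∫ x in Ioc a b, (α * x + β) ^ 2 * gaussianPDFReal μ v x =
      ((α * μ + β) ^ 2 + α ^ 2 * v) * (∫ x in Ioc a b, gaussianPDFReal μ v x) +
        (gaussianSqPrimitive μ v α β b - gaussianSqPrimitive μ v α β a) := by
  rw [setIntegral_affine_sq_mul_gaussianPDFReal, ← intervalIntegral.integral_of_le hab,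
    ← intervalIntegral.integral_of_le hab,
    intervalIntegral.integral_eq_sub_of_hasDerivAt
      (fun x _ ↦ hasDerivAt_gaussianSqPrimitive hv α β x)
      (integrable_affine_sq_sub_mul_gaussianPDFReal α β _).intervalIntegrable]

lemma integral_piecewise_affine_sq_gaussianReal (hv : v ≠ 0) {a b : ℝ} (hab : a ≤ b)
    {α₁ β₁ α₂ β₂ α₃ β₃ : ℝ} {F : ℝ → ℝ}
    (hF : ∀ x, F x = if x > b then α₃ * x + β₃ else if x < a then α₁ * x + β₁ else α₂ * x + β₂) :
    ∫ x, F x ^ 2 ∂gaussianReal μ v =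
      (∫ x in Iic a, (α₁ * x + β₁) ^ 2 * gaussianPDFReal μ v x)
        + (∫ x in Ioc a b, (α₂ * x + β₂) ^ 2 * gaussianPDFReal μ v x)
        + ∫ x in Ioi b, (α₃ * x + β₃) ^ 2 * gaussianPDFReal μ v x := by
  have hsq (α β : ℝ) : Integrable (fun x ↦ (α * x + β) ^ 2 * gaussianPDFReal μ v x) := by
    simpa using integrable_affine_sq_sub_mul_gaussianPDFReal (μ := μ) (v := v) α β 0
  -- `F a` is given by the middle piece, so the split is exact with `Iio a` and `Icc a b`;
  -- the endpoints are then moved, being Lebesgue-null.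
  have hsplit (x : ℝ) : gaussianPDFReal μ v x • F x ^ 2 =
      (Iio a).indicator (fun x ↦ (α₁ * x + β₁) ^ 2 * gaussianPDFReal μ v x) x
        + (Icc a b).indicator (fun x ↦ (α₂ * x + β₂) ^ 2 * gaussianPDFReal μ v x) x
        + (Ioi b).indicator (fun x ↦ (α₃ * x + β₃) ^ 2 * gaussianPDFReal μ v x) x := by
    simp only [hF x, indicator, mem_Iio, mem_Icc, mem_Ioi, smul_eq_mul]
    split_ifs <;> grind
  rw [integral_gaussianReal_eq_integral_smul hv, integral_congr_ae (ae_of_all _ hsplit),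
    integral_add (((hsq _ _).indicator measurableSet_Iio).fun_add
      ((hsq _ _).indicator measurableSet_Icc)) ((hsq _ _).indicator measurableSet_Ioi),
    integral_add ((hsq _ _).indicator measurableSet_Iio) ((hsq _ _).indicator measurableSet_Icc),
    integral_indicator measurableSet_Iio, integral_indicator measurableSet_Icc,
    integral_indicator measurableSet_Ioi, integral_Iic_eq_integral_Iio,
    integral_Icc_eq_integral_Ioc]

end ProbabilityTheory

/-- second moment of a piecewise-linear function of a Gaussian. -/
theorem gaussian_piecewise_linear_sq_moment
    (θ σ : ℝ) (hσ : 0 < σ) (w : ℝ) (hw : 0 < w) (h d e m f g : ℝ)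
    (F : ℝ → ℝ)
    (hF : ∀ z : ℝ, F z = if z > w then h * z + d
      else if z < -w then f * z + g else e * z + m) :
    let v : NNReal := ⟨σ^2, by positivity⟩
    let μ := gaussianReal θ v
    let φ := gaussianPDFReal θ v
    (∫ z, (F z)^2 ∂μ) =
      (σ^2 * (h^2 * w + h^2 * θ + 2 * d * h) - σ^2 * (e^2 * w + e^2 * θ + 2 * m * e)) * φ w
      + (σ^2 * (-(e^2) * w + e^2 * θ + 2 * m * e)
          - σ^2 * (-(f^2) * w + f^2 * θ + 2 * g * f)) * φ (-w)
      + ((h * θ + d)^2 + h^2 * σ^2) * (μ {z | z > w}).toReal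
      + ((f * θ + g)^2 + f^2 * σ^2) * (μ {z | z < -w}).toReal
      + ((e * θ + m)^2 + e^2 * σ^2) * (μ {z | |z| < w}).toReal := by
  intro v μ φ
  have hσv : (v : ℝ) = σ ^ 2 := rfl
  have hv : v ≠ 0 := by
    rw [ne_eq, ← NNReal.coe_eq_zero, hσv]
    positivity
  have hmeasure (s : Set ℝ) : (μ s).toReal = ∫ z in s, φ z := toReal_gaussianReal_apply hv s
  have hIoi : (μ {z | z > w}).toReal = ∫ z in Ioi w, φ z := hmeasure (Ioi w)
  have hIic : (μ {z | z < -w}).toReal = ∫ z in Iic (-w), φ z := by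
    rw [hmeasure, integral_Iic_eq_integral_Iio]
    rfl
  have hIoc : (μ {z | |z| < w}).toReal = ∫ z in Ioc (-w) w, φ z := by
    rw [hmeasure, integral_Ioc_eq_integral_Ioo]
    simp only [abs_lt]
    rfl
  rw [integral_piecewise_affine_sq_gaussianReal hv (neg_le_self hw.le) hF,
    setIntegral_Iic_affine_sq_mul_gaussianPDFReal hv,
    setIntegral_Ioc_affine_sq_mul_gaussianPDFReal hv _ _ (neg_le_self hw.le),
    setIntegral_Ioi_affine_sq_mul_gaussianPDFReal hv, hIoi, hIic, hIoc]
  simp only [gaussianSqPrimitive, hσv]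
  ring
end

section
/- If Z ~ N(θ, σ²), k ∈ (0,1], λ₁ > 0, and d_lava(z) = (1−k)z + k·sign(z)·max(|z| − λ₁/(2k), 0), then E[(Z − θ)·d_lava(Z)] = (1−k)σ² + kσ²·P(|Z| > λ₁/(2k)). -/
open MeasureTheory ProbabilityTheory
open MeasureTheory ProbabilityTheory Real Filter Set


lemma stein_tendsto_id_mul_exp (b : ℝ) (hb : 0 < b) :
    Tendsto (fun x : ℝ => x * Real.exp (-(b * x ^ 2))) atTop (nhds 0) := by
  have h1 : Tendsto (fun x : ℝ => x * Real.exp (-x)) atTop (nhds 0) := by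
    simpa using Real.tendsto_pow_mul_exp_neg_atTop_nhds_zero 1
  refine tendsto_of_tendsto_of_tendsto_of_le_of_le' tendsto_const_nhds h1 ?_ ?_
  · filter_upwards [eventually_ge_atTop (0:ℝ)] with x hx
    positivity
  · filter_upwards [eventually_ge_atTop (max 1 (1/b))] with x hx
    have hx1 : (1:ℝ) ≤ x := le_trans (le_max_left _ _) hx
    have hxb : 1/b ≤ x := le_trans (le_max_right _ _) hx
    have hx0 : (0:ℝ) < x := lt_of_lt_of_le one_pos hx1
    have hle : x ≤ b * x ^ 2 := by
      have h1b : 1 ≤ b * x := by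
        rw [div_le_iff₀ hb] at hxb
        nlinarith
      nlinarith
    have := Real.exp_le_exp.mpr (neg_le_neg hle)
    exact mul_le_mul_of_nonneg_left this hx0.le

lemma stein_tendsto_exp_gauss (b : ℝ) (hb : 0 < b) :
    Tendsto (fun x : ℝ => Real.exp (-(b * x ^ 2))) atTop (nhds 0) := by
  apply Real.tendsto_exp_neg_atTop_nhds_zero.comp
  exact (tendsto_pow_atTop two_ne_zero).const_mul_atTop hb

lemma stein_tendsto_affine_gauss_atTop (b θ s t : ℝ) (hb : 0 < b) :
    Tendsto (fun z : ℝ => (s * z + t) * Real.exp (-(b * (z - θ) ^ 2))) atTop (nhds 0) := by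
  have hshift : Tendsto (fun z : ℝ => z - θ) atTop atTop :=
    (tendsto_atTop_add_const_right atTop (-θ) tendsto_id).congr
      (fun z => (sub_eq_add_neg z θ).symm)
  have h1 := ((stein_tendsto_id_mul_exp b hb).comp hshift).const_mul s
  have h2 := ((stein_tendsto_exp_gauss b hb).comp hshift).const_mul (s * θ + t)
  have h3 := h1.add h2
  rw [mul_zero, mul_zero, add_zero] at h3
  refine h3.congr fun z => ?_
  simp only [Function.comp_apply]
  ring

lemma stein_tendsto_affine_gauss_atBot (b θ s t : ℝ) (hb : 0 < b) :
    Tendsto (fun z : ℝ => (s * z + t) * Real.exp (-(b * (z - θ) ^ 2))) atBot (nhds 0) := by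
  have := (stein_tendsto_affine_gauss_atTop b (-θ) (-s) t hb).comp tendsto_neg_atBot_atTop
  refine this.congr fun z => ?_
  simp only [Function.comp_apply]
  rw [show -z - -θ = -(z - θ) by ring, neg_sq]
  ring

lemma stein_integrable_poly_gauss (b θ a0 a1 a2 : ℝ) (hb : 0 < b) :
    Integrable (fun z : ℝ => (a2 * z ^ 2 + a1 * z + a0) * Real.exp (-(b * (z - θ) ^ 2))) := by
  have hsq : Integrable (fun w : ℝ => w ^ 2 * Real.exp (-b * w ^ 2)) := by
    have := integrable_rpow_mul_exp_neg_mul_sq hb (s := 2) (by norm_num)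
    exact this.congr (Filter.Eventually.of_forall fun w => by simp only [Real.rpow_two])
  have hlin := integrable_mul_exp_neg_mul_sq hb
  have hconst := integrable_exp_neg_mul_sq hb
  have base : Integrable (fun w : ℝ =>
      (a2 * w ^ 2 + (2 * a2 * θ + a1) * w + (a2 * θ ^ 2 + a1 * θ + a0))
        * Real.exp (-b * w ^ 2)) := by
    have h := ((hsq.const_mul a2).add (hlin.const_mul (2 * a2 * θ + a1))).add
      (hconst.const_mul (a2 * θ ^ 2 + a1 * θ + a0))
    exact h.congr (Filter.Eventually.of_forall fun w => by simp only [Pi.add_apply]; ring)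
  have h := base.comp_sub_right θ
  refine h.congr (Filter.Eventually.of_forall fun z => ?_)
  simp only []
  rw [neg_mul]
  ring_nf


/-- Stein's identity for the lava shrinkage:
`E[(Z − θ) d_lava(Z)] = (1−k) σ² + k σ² P(|Z| > λ₁/(2k))`. -/
theorem gaussian_stein_lava
    (θ σ lam1 k : ℝ) (hσ : 0 < σ) (hlam1 : 0 < lam1) (hk0 : 0 < k) (hk1 : k ≤ 1) :
    let v : NNReal := ⟨σ^2, by positivity⟩
    let μ := gaussianReal θ v
    let dlava : ℝ → ℝ := fun z =>
      (1 - k) * z + k * Real.sign z * max (|z| - lam1 / (2 * k)) 0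
    (∫ z, (z - θ) * dlava z ∂μ)
      = (1 - k) * σ^2 + k * σ^2 * (μ {z | |z| > lam1 / (2 * k)}).toReal := by
  intro v μ dlava
  have hv0 : (v : ℝ) = σ ^ 2 := rfl
  have hvne : v ≠ 0 := by
    intro h
    have h2 : (v : ℝ) = 0 := by rw [h]; simp
    rw [hv0] at h2
    nlinarith
  set c : ℝ := lam1 / (2 * k) with hc
  have hcpos : 0 < c := by positivity
  set b : ℝ := (2 * σ ^ 2)⁻¹ with hbdef
  have hbpos : 0 < b := by positivity
  set C : ℝ := (Real.sqrt (2 * Real.pi * σ ^ 2))⁻¹ with hCdef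
  have hCpos : 0 < C := by
    have : 0 < Real.sqrt (2 * Real.pi * σ ^ 2) := Real.sqrt_pos.mpr (by positivity)
    positivity
  set φ : ℝ → ℝ := fun z => C * Real.exp (-(b * (z - θ) ^ 2)) with hφdef
  have hφ_nonneg : ∀ z, 0 ≤ φ z := fun z => by
    rw [hφdef]; positivity
  have hφ_eq : gaussianPDFReal θ v = φ := by
    funext z
    rw [gaussianPDFReal, hφdef]
    simp only [hv0]
    congr 1
    rw [hbdef]
    congr 1
    field_simp
  have hφ_int : Integrable φ := by
    have := stein_integrable_poly_gauss b θ C 0 0 hbpos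
    refine this.congr (Filter.Eventually.of_forall fun z => ?_)
    rw [hφdef]; ring
  -- derivative of the auxiliary functions
  have hσ2b : σ ^ 2 * (2 * b) = 1 := by
    rw [hbdef]; field_simp
  have hderivH : ∀ s t z : ℝ, HasDerivAt (fun z => -σ ^ 2 * (s * z + t) * φ z)
      ((s * z + t) * (z - θ) * φ z - σ ^ 2 * s * φ z) z := by
    intro s t z
    have h1 : HasDerivAt (fun z : ℝ => -(b * (z - θ) ^ 2)) (-(b * (2 * (z - θ)))) z := by
      have h0 := ((hasDerivAt_id z).sub_const θ).pow 2
      have := (h0.const_mul b).neg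
      refine this.congr_deriv ?_
      simp
    have hφd : HasDerivAt φ (C * (Real.exp (-(b * (z - θ) ^ 2)) * (-(b * (2 * (z - θ)))))) z := by
      rw [hφdef]
      exact (h1.exp).const_mul C
    have hlin : HasDerivAt (fun z : ℝ => -σ ^ 2 * (s * z + t)) (-σ ^ 2 * s) z := by
      have := (((hasDerivAt_id z).const_mul s).add_const t).const_mul (-σ ^ 2)
      simpa using this
    have hmul := hlin.mul hφd
    refine hmul.congr_deriv ?_
    symm
    have hφz : φ z = C * Real.exp (-(b * (z - θ) ^ 2)) := by rw [hφdef]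
    rw [hφz]
    set E := Real.exp (-(b * (z - θ) ^ 2)) with hE
    linear_combination (-(s * z + t) * (z - θ) * C * E) * hσ2b
  have htendTop : ∀ s t : ℝ, Tendsto (fun z => -σ ^ 2 * (s * z + t) * φ z) atTop (nhds 0) := by
    intro s t
    have := stein_tendsto_affine_gauss_atTop b θ (-σ ^ 2 * s * C) (-σ ^ 2 * t * C) hbpos
    refine this.congr fun z => ?_
    rw [hφdef]; ring
  have htendBot : ∀ s t : ℝ, Tendsto (fun z => -σ ^ 2 * (s * z + t) * φ z) atBot (nhds 0) := by
    intro s t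
    have := stein_tendsto_affine_gauss_atBot b θ (-σ ^ 2 * s * C) (-σ ^ 2 * t * C) hbpos
    refine this.congr fun z => ?_
    rw [hφdef]; ring
  -- integrability of the derivative formulas
  have hH'_int : ∀ s t : ℝ, Integrable (fun z => (s * z + t) * (z - θ) * φ z - σ ^ 2 * s * φ z) := by
    intro s t
    have := stein_integrable_poly_gauss b θ ((-t * θ - σ ^ 2 * s) * C) ((t - s * θ) * C) (s * C) hbpos
    refine this.congr (Filter.Eventually.of_forall fun z => ?_)
    rw [hφdef]; ring
  -- the integrand
  set G : ℝ → ℝ := fun z => (z - θ) * dlava z * φ z with hGdef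
  have hd_cont : ∀ z, dlava z = (1 - k) * z + k * (max (z - c) 0 - max (-z - c) 0) := by
    intro z
    show (1 - k) * z + k * Real.sign z * max (|z| - c) 0 = _
    rcases lt_trichotomy z 0 with hz | hz | hz
    · rw [Real.sign_of_neg hz, abs_of_neg hz,
        max_eq_right (by linarith : z - c ≤ 0)]
      ring
    · subst hz
      rw [Real.sign_zero, abs_zero]
      rw [max_eq_right (by linarith : (0:ℝ) - c ≤ 0), max_eq_right (by linarith : -(0:ℝ) - c ≤ 0)]
      ring
    · rw [Real.sign_of_pos hz, abs_of_pos hz,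
        max_eq_right (by linarith : -z - c ≤ 0)]
      ring
  have hd_bound : ∀ z, |dlava z| ≤ |z| := by
    intro z
    rw [hd_cont]
    rcases le_or_gt z 0 with hz | hz
    · rw [max_eq_right (by linarith : z - c ≤ 0), abs_of_nonpos hz]
      have hm0 : 0 ≤ max (-z - c) 0 := le_max_right _ _
      have hm1 : max (-z - c) 0 ≤ -z := max_le (by linarith) (by linarith)
      rw [abs_le]
      constructor
      · nlinarith
      · nlinarith
    · rw [max_eq_right (by linarith : -z - c ≤ 0), abs_of_pos hz]
      have hm0 : 0 ≤ max (z - c) 0 := le_max_right _ _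
      have hm1 : max (z - c) 0 ≤ z := max_le (by linarith) (by linarith)
      rw [abs_le]
      constructor
      · nlinarith
      · nlinarith
  have hG_cont : Continuous G := by
    have h1 : Continuous fun z : ℝ =>
        (z - θ) * ((1 - k) * z + k * (max (z - c) 0 - max (-z - c) 0)) * φ z := by
      rw [hφdef]
      fun_prop
    refine h1.congr fun z => ?_
    show _ = (z - θ) * dlava z * φ z
    rw [hd_cont z]
  have hG_int : Integrable G := by
    refine (stein_integrable_poly_gauss b θ (|θ| * C) 0 ((1 + |θ|) * C) hbpos).mono'
      hG_cont.aestronglyMeasurable ?_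
    filter_upwards with z
    have hφz : φ z = C * Real.exp (-(b * (z - θ) ^ 2)) := by rw [hφdef]
    have h1 : ‖G z‖ = |z - θ| * |dlava z| * φ z := by
      rw [Real.norm_eq_abs, hGdef]
      rw [abs_mul, abs_mul, abs_of_nonneg (hφ_nonneg z)]
    rw [h1]
    have h2 : |z - θ| ≤ |z| + |θ| := abs_sub _ _
    have h3 : |z - θ| * |dlava z| ≤ (|z| + |θ|) * |z| :=
      mul_le_mul h2 (hd_bound z) (abs_nonneg _) (by positivity)
    have h4 : (|z| + |θ|) * |z| ≤ (1 + |θ|) * z ^ 2 + |θ| := by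
      have hzz : |z| ≤ z ^ 2 + 1 := by nlinarith [sq_nonneg (|z| - 1), abs_nonneg z, sq_abs z]
      nlinarith [abs_nonneg z, abs_nonneg θ, sq_abs z]
    calc |z - θ| * |dlava z| * φ z ≤ ((1 + |θ|) * z ^ 2 + |θ|) * φ z := by
          have := le_trans h3 h4
          exact mul_le_mul_of_nonneg_right this (hφ_nonneg z)
      _ = ((1 + |θ|) * C * z ^ 2 + 0 * z + |θ| * C) * Real.exp (-(b * (z - θ) ^ 2)) := by
          rw [hφz]; ring
  -- convert to a Lebesgue integral
  have hμeq : μ = volume.withDensity (gaussianPDF θ v) := gaussianReal_of_var_ne_zero θ hvne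
  have hint_eq : (∫ z, (z - θ) * dlava z ∂μ) = ∫ z, G z := by
    rw [hμeq]
    rw [show (gaussianPDF θ v)
        = (fun x => ((gaussianPDFReal θ v x).toNNReal : ENNReal)) from rfl]
    rw [integral_withDensity_eq_integral_smul
      ((measurable_gaussianPDFReal θ v).real_toNNReal) (fun z => (z - θ) * dlava z)]
    congr 1
    funext z
    rw [NNReal.smul_def, Real.coe_toNNReal _ (gaussianPDFReal_nonneg θ v z)]
    show gaussianPDFReal θ v z * ((z - θ) * dlava z) = (z - θ) * dlava z * φ z
    rw [hφ_eq]
    ring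
  -- the measure of the tail set
  have hSset : {z : ℝ | |z| > c} = Iio (-c) ∪ Ioi c := by
    ext z
    simp only [mem_setOf_eq, mem_union, mem_Iio, mem_Ioi]
    rw [gt_iff_lt, lt_abs]
    constructor
    · rintro (h | h)
      · right; exact h
      · left; linarith
    · rintro (h | h)
      · right; linarith
      · left; exact h
  have hdisj1 : Disjoint (Iio (-c)) (Ioi c) := by
    rw [Set.disjoint_left]
    intro x hx hx'
    simp only [mem_Iio] at hx
    simp only [mem_Ioi] at hx'
    linarith
  have hmeasS : (μ {z : ℝ | |z| > c}).toReal
      = (∫ z in Iio (-c), φ z) + ∫ z in Ioi c, φ z := by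
    rw [show μ {z : ℝ | |z| > c}
        = ENNReal.ofReal (∫ x in {z : ℝ | |z| > c}, gaussianPDFReal θ v x) from
      gaussianReal_apply_eq_integral θ hvne _]
    rw [ENNReal.toReal_ofReal (integral_nonneg fun x => gaussianPDFReal_nonneg θ v x)]
    rw [hφ_eq, hSset]
    exact setIntegral_union hdisj1 measurableSet_Ioi hφ_int.integrableOn hφ_int.integrableOn
  -- region computations
  have hregion3 : ∫ z in Ioi c, G z
      = σ ^ 2 * c * (1 - k) * φ c + σ ^ 2 * ∫ z in Ioi c, φ z := by
    have h1 : ∀ z ∈ Ioi c, G z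
        = ((1 * z + -(k * c)) * (z - θ) * φ z - σ ^ 2 * 1 * φ z) + σ ^ 2 * φ z := by
      intro z hz
      have hz' : c < z := hz
      have hd : dlava z = z - k * c := by
        show (1 - k) * z + k * Real.sign z * max (|z| - c) 0 = z - k * c
        rw [Real.sign_of_pos (by linarith), abs_of_pos (by linarith),
          max_eq_left (by linarith : (0:ℝ) ≤ z - c)]
        ring
      show (z - θ) * dlava z * φ z = _
      rw [hd]; ring
    rw [setIntegral_congr_fun measurableSet_Ioi h1,
      integral_add ((hH'_int 1 (-(k * c))).integrableOn) (hφ_int.integrableOn.const_mul _)]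
    have hftc := integral_Ioi_of_hasDerivAt_of_tendsto
      (f := fun z => -σ ^ 2 * (1 * z + -(k * c)) * φ z) (a := c) (m := 0)
      ((hderivH 1 (-(k * c)) c).continuousAt.continuousWithinAt)
      (fun x _ => hderivH 1 (-(k * c)) x)
      ((hH'_int 1 (-(k * c))).integrableOn)
      (htendTop 1 (-(k * c)))
    rw [hftc, integral_const_mul]
    ring
  have hregion1 : ∫ z in Iic (-c), G z
      = σ ^ 2 * c * (1 - k) * φ (-c) + σ ^ 2 * ∫ z in Iic (-c), φ z := by
    have h1 : ∀ z ∈ Iic (-c), G z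
        = ((1 * z + k * c) * (z - θ) * φ z - σ ^ 2 * 1 * φ z) + σ ^ 2 * φ z := by
      intro z hz
      have hz' : z ≤ -c := hz
      have hd : dlava z = z + k * c := by
        show (1 - k) * z + k * Real.sign z * max (|z| - c) 0 = z + k * c
        rw [Real.sign_of_neg (by linarith), abs_of_neg (by linarith),
          max_eq_left (by linarith : (0:ℝ) ≤ -z - c)]
        ring
      show (z - θ) * dlava z * φ z = _
      rw [hd]; ring
    rw [setIntegral_congr_fun measurableSet_Iic h1,
      integral_add ((hH'_int 1 (k * c)).integrableOn) (hφ_int.integrableOn.const_mul _)]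
    have hftc := integral_Iic_of_hasDerivAt_of_tendsto
      (f := fun z => -σ ^ 2 * (1 * z + k * c) * φ z) (a := -c) (m := 0)
      ((hderivH 1 (k * c) (-c)).continuousAt.continuousWithinAt)
      (fun x _ => hderivH 1 (k * c) x)
      ((hH'_int 1 (k * c)).integrableOn)
      (htendBot 1 (k * c))
    rw [hftc, integral_const_mul]
    ring
  have hle : -c ≤ c := by linarith
  have hregion2 : ∫ z in Ioc (-c) c, G z
      = (-(σ ^ 2 * (1 - k) * c * φ c) - σ ^ 2 * (1 - k) * c * φ (-c))
        + σ ^ 2 * (1 - k) * ∫ z in Ioc (-c) c, φ z := by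
    have h1 : ∀ z ∈ Ioc (-c) c, G z
        = (((1 - k) * z + 0) * (z - θ) * φ z - σ ^ 2 * (1 - k) * φ z)
          + σ ^ 2 * (1 - k) * φ z := by
      intro z hz
      have hzabs : |z| ≤ c := abs_le.mpr ⟨le_of_lt hz.1, hz.2⟩
      have hd : dlava z = (1 - k) * z := by
        show (1 - k) * z + k * Real.sign z * max (|z| - c) 0 = (1 - k) * z
        rw [max_eq_right (by linarith : |z| - c ≤ 0)]
        ring
      show (z - θ) * dlava z * φ z = _
      rw [hd]; ring
    rw [setIntegral_congr_fun measurableSet_Ioc h1,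
      integral_add ((hH'_int (1 - k) 0).integrableOn) (hφ_int.integrableOn.const_mul _)]
    have hftc : ∫ z in Ioc (-c) c,
        (((1 - k) * z + 0) * (z - θ) * φ z - σ ^ 2 * (1 - k) * φ z)
        = (fun z => -σ ^ 2 * ((1 - k) * z + 0) * φ z) c
          - (fun z => -σ ^ 2 * ((1 - k) * z + 0) * φ z) (-c) := by
      rw [← intervalIntegral.integral_of_le hle]
      exact intervalIntegral.integral_eq_sub_of_hasDerivAt
        (fun x _ => hderivH (1 - k) 0 x)
        ((hH'_int (1 - k) 0).intervalIntegrable)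
    rw [hftc, integral_const_mul]
    ring
  -- splitting the real line
  have hsplit : ∀ f : ℝ → ℝ, Integrable f →
      ∫ z, f z = (∫ z in Iic (-c), f z) + ((∫ z in Ioc (-c) c, f z) + ∫ z in Ioi c, f z) := by
    intro f hf
    have e1 : (∫ z in Ioc (-c) c, f z) + (∫ z in Ioi c, f z) = ∫ z in Ioi (-c), f z := by
      rw [← setIntegral_union (Ioc_disjoint_Ioi le_rfl) measurableSet_Ioi
        hf.integrableOn hf.integrableOn, Ioc_union_Ioi_eq_Ioi hle]
    rw [e1, ← setIntegral_union (Iic_disjoint_Ioi le_rfl) measurableSet_Ioi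
      hf.integrableOn hf.integrableOn, Iic_union_Ioi, setIntegral_univ]
  have htotal : (∫ z in Iic (-c), φ z) + ((∫ z in Ioc (-c) c, φ z) + ∫ z in Ioi c, φ z) = 1 := by
    rw [← hsplit φ hφ_int, ← hφ_eq]
    exact integral_gaussianPDFReal_eq_one θ hvne
  have hIic_Iio : ∫ z in Iic (-c), φ z = ∫ z in Iio (-c), φ z :=
    (setIntegral_congr_set Iio_ae_eq_Iic).symm
  rw [hint_eq, hsplit G hG_int, hregion1, hregion2, hregion3, hmeasS, ← hIic_Iio]
  linear_combination (σ ^ 2 * (1 - k)) * htotal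
end

section
/- If Z ~ N(θ, σ²), w = λ₁/(2k), k ∈ (0,1], then E[(Z − d_lava(Z))²] = −k²(w + θ)φ(w)σ² + k²(θ − w)φ(−w)σ² + (λ₁²/4)·P(|Z| > w) + k²(θ² + σ²)·P(|Z| < w), where d_lava(z) = (1−k)z + k·sign(z)·max(|z| − w, 0) and φ is the N(θ,σ²) density. -/
/-!
The residual `z - d_lava(z)` is `k z` on `[-w, w]` and `± k w = ± λ₁ / 2` outside, so the second
moment splits into `k²` times a truncated Gaussian second moment plus `λ₁² / 4` times a tail
probability. The truncated moment follows from the fundamental theorem of calculus, since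
`x ↦ -σ² (x + θ) φ(x)` is an antiderivative of `(x² - θ² - σ²) φ(x)`.
-/

open MeasureTheory ProbabilityTheory Real Set

noncomputable def lavaShrink (k w z : ℝ) : ℝ :=
  (1 - k) * z + k * Real.sign z * max (|z| - w) 0

lemma sq_sub_lavaShrink (k : ℝ) {w : ℝ} (hw : 0 ≤ w) (z : ℝ) :
    (z - lavaShrink k w z) ^ 2 =
      (Icc (-w) w).indicator (fun z => k ^ 2 * z ^ 2) z
        + {z | w < |z|}.indicator (fun _ => (k * w) ^ 2) z := by
  by_cases hz : |z| ≤ w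
  · have hS : z ∈ Icc (-w) w := abs_le.mp hz
    have hT : z ∉ {z | w < |z|} := not_lt.mpr hz
    rw [indicator_of_mem hS, indicator_of_notMem hT, lavaShrink,
      max_eq_right (by linarith)]
    ring
  · have hS : z ∉ Icc (-w) w := fun h => hz (abs_le.mpr h)
    have hT : z ∈ {z | w < |z|} := not_le.mp hz
    rw [indicator_of_notMem hS, indicator_of_mem hT, lavaShrink,
      max_eq_left (by linarith)]
    rcases lt_trichotomy z 0 with hneg | rfl | hpos
    · rw [Real.sign_of_neg hneg, abs_of_neg hneg]; ring
    · simp at hz; linarith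
    · rw [Real.sign_of_pos hpos, abs_of_pos hpos]; ring

lemma integral_sq_sub_lavaShrink (μ : Measure ℝ) [IsFiniteMeasure μ] (k : ℝ) {w : ℝ}
    (hw : 0 ≤ w) :
    ∫ z, (z - lavaShrink k w z) ^ 2 ∂μ =
      k ^ 2 * ∫ z in Icc (-w) w, z ^ 2 ∂μ + (k * w) ^ 2 * μ.real {z | w < |z|} := by
  have hT : MeasurableSet {z : ℝ | w < |z|} :=
    measurableSet_lt measurable_const continuous_abs.measurable
  have hS_int : Integrable ((Icc (-w) w).indicator fun z => k ^ 2 * z ^ 2) μ :=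
    (by fun_prop : Continuous fun z : ℝ => k ^ 2 * z ^ 2).integrableOn_Icc.integrable_indicator
      measurableSet_Icc
  rw [integral_congr_ae (ae_of_all _ (sq_sub_lavaShrink k hw)),
    integral_add hS_int ((integrable_const _).indicator hT),
    integral_indicator measurableSet_Icc, integral_indicator_const _ hT,
    integral_const_mul, smul_eq_mul, mul_comm (μ.real _)]

lemma hasDerivAt_gaussianPDFReal (θ : ℝ) (v : NNReal) (x : ℝ) :
    HasDerivAt (gaussianPDFReal θ v) (-(x - θ) / v * gaussianPDFReal θ v x) x := by
  rcases eq_or_ne v 0 with rfl | hv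
  · simp [gaussianPDFReal_zero_var]
  have hv' : (v : ℝ) ≠ 0 := NNReal.coe_ne_zero.mpr hv
  have hexp : HasDerivAt (fun x : ℝ => -(x - θ) ^ 2 / (2 * v)) (-(x - θ) / v) x := by
    refine ((((hasDerivAt_id' x).sub_const θ).pow 2).neg.div_const _).congr_deriv ?_
    field_simp
    ring
  refine (hexp.exp.const_mul (√(2 * π * v))⁻¹).congr_deriv ?_
  simp only [gaussianPDFReal]
  ring

@[fun_prop]
lemma continuous_gaussianPDFReal (θ : ℝ) (v : NNReal) : Continuous (gaussianPDFReal θ v) := by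
  simp only [gaussianPDFReal_def]
  fun_prop

lemma hasDerivAt_mul_gaussianPDFReal (θ : ℝ) (v : NNReal) (x : ℝ) :
    HasDerivAt (fun x => -v * (x + θ) * gaussianPDFReal θ v x)
      ((x ^ 2 - (θ ^ 2 + v)) * gaussianPDFReal θ v x) x := by
  rcases eq_or_ne v 0 with rfl | hv
  · simpa [gaussianPDFReal_zero_var] using hasDerivAt_const x (0 : ℝ)
  have hv' : (v : ℝ) ≠ 0 := NNReal.coe_ne_zero.mpr hv
  refine ((((hasDerivAt_id' x).add_const θ).const_mul (-(v : ℝ))).mul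
    (hasDerivAt_gaussianPDFReal θ v x)).congr_deriv ?_
  field_simp
  ring

lemma intervalIntegral_sq_mul_gaussianPDFReal (θ : ℝ) (v : NNReal) (a b : ℝ) :
    ∫ x in a..b, x ^ 2 * gaussianPDFReal θ v x =
      v * ((a + θ) * gaussianPDFReal θ v a - (b + θ) * gaussianPDFReal θ v b)
        + (θ ^ 2 + v) * ∫ x in a..b, gaussianPDFReal θ v x := by
  have hFTC := intervalIntegral.integral_eq_sub_of_hasDerivAt
    (fun x _ => hasDerivAt_mul_gaussianPDFReal θ v x)
    ((by fun_prop : Continuous fun x => (x ^ 2 - (θ ^ 2 + v)) * gaussianPDFReal θ v x)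
      |>.intervalIntegrable a b)
  set φ := gaussianPDFReal θ v
  have hsplit : ∫ x in a..b, x ^ 2 * φ x
      = (∫ x in a..b, (x ^ 2 - (θ ^ 2 + v)) * φ x) + ∫ x in a..b, (θ ^ 2 + v) * φ x := by
    rw [← intervalIntegral.integral_add
      ((by fun_prop : Continuous fun x => (x ^ 2 - (θ ^ 2 + v)) * φ x).intervalIntegrable a b)
      ((by fun_prop : Continuous fun x => (θ ^ 2 + v) * φ x).intervalIntegrable a b)]
    congr 1 with x
    ring
  rw [hsplit, hFTC, intervalIntegral.integral_const_mul]
  ring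

lemma setIntegral_gaussianReal_Icc (θ : ℝ) {v : NNReal} (hv : v ≠ 0) (f : ℝ → ℝ) {a b : ℝ}
    (hab : a ≤ b) :
    ∫ x in Icc a b, f x ∂gaussianReal θ v = ∫ x in a..b, f x * gaussianPDFReal θ v x := by
  rw [← integral_indicator measurableSet_Icc, integral_gaussianReal_eq_integral_smul hv,
    intervalIntegral.integral_of_le hab, ← integral_Icc_eq_integral_Ioc,
    ← integral_indicator measurableSet_Icc]
  congr 1 with x
  by_cases hx : x ∈ Icc a b <;> simp [hx, mul_comm]

lemma gaussianReal_real_abs_lt (θ : ℝ) {v : NNReal} (hv : v ≠ 0) {w : ℝ} (hw : 0 ≤ w) :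
    (gaussianReal θ v).real {z | |z| < w} = ∫ x in -w..w, gaussianPDFReal θ v x := by
  have hset : {z : ℝ | |z| < w} = Ioo (-w) w :=
    Set.ext fun z => abs_lt (a := z)
  rw [measureReal_def, hset, gaussianReal_apply_eq_integral θ hv,
    ENNReal.toReal_ofReal (integral_nonneg (gaussianPDFReal_nonneg θ v)),
    intervalIntegral.integral_of_le (show -w ≤ w by linarith), integral_Ioc_eq_integral_Ioo]

/-- `E[(Z − d_lava(Z))²]` for a Gaussian `Z ~ N(θ, σ²)`. -/
theorem gaussian_lava_residual_sq_moment
    (θ σ lam1 k : ℝ) (hσ : 0 < σ) (hlam1 : 0 < lam1) (hk0 : 0 < k)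
    (w : ℝ) (hw : w = lam1 / (2 * k)) :
    let v : NNReal := ⟨σ^2, by positivity⟩
    let μ := gaussianReal θ v
    let φ := gaussianPDFReal θ v
    let dlava : ℝ → ℝ := fun z =>
      (1 - k) * z + k * Real.sign z * max (|z| - w) 0
    (∫ z, (z - dlava z)^2 ∂μ) =
      -(k^2) * (w + θ) * φ w * σ^2 + k^2 * (θ - w) * φ (-w) * σ^2
      + (lam1^2 / 4) * (μ {z | |z| > w}).toReal
      + k^2 * (θ^2 + σ^2) * (μ {z | |z| < w}).toReal := by
  intro v μ φ dlava
  have hv : v ≠ 0 := ne_of_gt (show (0 : ℝ) < σ ^ 2 by positivity)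
  have hw0 : 0 ≤ w := by rw [hw]; positivity
  have hkw : k * w = lam1 / 2 := by rw [hw]; field_simp
  show ∫ z, (z - lavaShrink k w z) ^ 2 ∂μ = _
  rw [integral_sq_sub_lavaShrink μ k hw0, setIntegral_gaussianReal_Icc θ hv _ (by linarith),
    intervalIntegral_sq_mul_gaussianPDFReal, ← gaussianReal_real_abs_lt θ hv hw0, hkw]
  change _ = _ + _ * μ.real {z | w < |z|} + _ * μ.real _
  rw [show ((v : NNReal) : ℝ) = σ ^ 2 from rfl]
  ring
end

section
/- Let X ∈ ℝ^{n×p}, λ₂ > 0, Y ∈ ℝ^n, K = I_n − X(X'X + nλ₂I_p)⁻¹X'. For every δ ∈ ℝ^p, with β̂(δ) = (X'X + nλ₂I_p)⁻¹X'(Y − Xδ), one has ‖Y − X(β̂(δ) + δ)‖₂² + nλ₂‖β̂(δ)‖₂² = ‖K^{1/2}(Y − Xδ)‖₂², where K^{1/2} is the positive semidefinite square root of K. -/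
/-!
Write `r = Y − Xδ`, `β = β̂(δ)` and `e = r − Xβ = K r`. Since `β` solves the ridge normal
equation `(XᵀX + nλ₂I)β = Xᵀr`, the residual satisfies `Xᵀe = nλ₂β`, so the penalty
`nλ₂‖β‖²` equals `⟨Xβ, e⟩`. Hence `‖e‖² + nλ₂‖β‖² = ⟨e + Xβ, e⟩ = ⟨r, Kr⟩`, and
`⟨r, Kr⟩ = ‖K^{1/2}r‖²` because `K^{1/2}` is symmetric and squares to `K`.
-/

open Matrix

section

open scoped ComplexOrder

/-- The psd square root of a positive semidefinite matrix, as defined in Mathlib of December 2024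
(`Matrix.PosSemidef.sqrt`, since removed from Mathlib). -/
noncomputable def Matrix.PosSemidef.sqrt {n 𝕜 : Type*} [Fintype n] [DecidableEq n] [RCLike 𝕜]
    {A : Matrix n n 𝕜} (hA : A.PosSemidef) : Matrix n n 𝕜 :=
  hA.1.eigenvectorUnitary.1 * diagonal ((↑) ∘ Real.sqrt ∘ hA.1.eigenvalues) *
  (star hA.1.eigenvectorUnitary : Matrix n n 𝕜)

end

namespace Matrix

variable {m n R : Type*} [Fintype m] [Fintype n]

theorem sum_sq_eq_dotProduct_self [CommSemiring R] (v : n → R) : ∑ i, v i ^ 2 = v ⬝ᵥ v := by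
  simp only [dotProduct, sq]

theorem sub_mulVec_dotProduct_self_add_mul_of_transpose_mulVec_eq [CommRing R]
    {X : Matrix m n R} {r : m → R} {β : n → R} {c : R}
    (h : Xᵀ *ᵥ (r - X *ᵥ β) = c • β) :
    (r - X *ᵥ β) ⬝ᵥ (r - X *ᵥ β) + c * (β ⬝ᵥ β) = r ⬝ᵥ (r - X *ᵥ β) := by
  have hpenalty : c * (β ⬝ᵥ β) = (X *ᵥ β) ⬝ᵥ (r - X *ᵥ β) := by
    rw [← smul_eq_mul, ← dotProduct_smul, ← h, dotProduct_mulVec, vecMul_transpose]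
  rw [hpenalty, ← add_dotProduct, sub_add_cancel]

/-- For `c > 0`, the minimizer of `‖r − Xβ‖² + c‖β‖²` over `β`. -/
noncomputable def ridgeSolution [Field R] [DecidableEq n] (X : Matrix m n R) (c : R) (r : m → R) :
    n → R :=
  (Xᵀ * X + c • (1 : Matrix n n R))⁻¹ *ᵥ (Xᵀ *ᵥ r)

theorem transpose_mulVec_sub_mulVec_ridgeSolution [Field R] [DecidableEq n] (X : Matrix m n R)
    (r : m → R) {c : R} (hQ : IsUnit (Xᵀ * X + c • (1 : Matrix n n R)).det) :
    Xᵀ *ᵥ (r - X *ᵥ ridgeSolution X c r) = c • ridgeSolution X c r := by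
  have hnormal : (Xᵀ * X + c • (1 : Matrix n n R)) *ᵥ ridgeSolution X c r = Xᵀ *ᵥ r := by
    rw [ridgeSolution, mulVec_mulVec, mul_nonsing_inv _ hQ, one_mulVec]
  rw [add_mulVec, smul_mulVec, one_mulVec, ← mulVec_mulVec] at hnormal
  rw [mulVec_sub, ← hnormal, add_sub_cancel_left]

theorem isUnit_det_transpose_mul_self_add_smul_one [DecidableEq n] (X : Matrix m n ℝ) {c : ℝ}
    (hc : 0 < c) : IsUnit (Xᵀ * X + c • (1 : Matrix n n ℝ)).det := by
  have hpd : (Xᵀ * X + c • (1 : Matrix n n ℝ)).PosDef := by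
    refine PosDef.posSemidef_add ?_ ?_
    · simpa only [conjTranspose_eq_transpose_of_trivial] using posSemidef_conjTranspose_mul_self X
    · rw [smul_one_eq_diagonal]
      exact .diagonal fun _ => hc
  exact (isUnit_iff_isUnit_det _).mp hpd.isUnit

namespace PosSemidef

open scoped ComplexOrder

variable {𝕜 : Type*} [RCLike 𝕜] [DecidableEq n] {A : Matrix n n 𝕜}

theorem conjTranspose_sqrt (hA : A.PosSemidef) : hA.sqrtᴴ = hA.sqrt := by
  simp only [PosSemidef.sqrt, star_eq_conjTranspose, conjTranspose_mul, conjTranspose_conjTranspose,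
    diagonal_conjTranspose, Matrix.mul_assoc]
  congr 3
  funext i
  simp

theorem sqrt_mul_self (hA : A.PosSemidef) : hA.sqrt * hA.sqrt = A := by
  have hU := Unitary.coe_star_mul_self hA.1.eigenvectorUnitary
  conv_rhs => rw [hA.1.spectral_theorem, Unitary.conjStarAlgAut_apply]
  simp only [PosSemidef.sqrt, Matrix.mul_assoc]
  rw [← Matrix.mul_assoc (star _) _ (diagonal _ * _), hU, Matrix.one_mul,
    ← Matrix.mul_assoc (diagonal _) (diagonal _), diagonal_mul_diagonal]
  congr 3
  funext i
  simp [← RCLike.ofReal_mul, Real.mul_self_sqrt (hA.eigenvalues_nonneg i)]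

theorem star_sqrt_mulVec_dotProduct (hA : A.PosSemidef) (v : n → 𝕜) :
    star (hA.sqrt *ᵥ v) ⬝ᵥ (hA.sqrt *ᵥ v) = star v ⬝ᵥ (A *ᵥ v) := by
  rw [star_mulVec, ← dotProduct_mulVec, conjTranspose_sqrt, mulVec_mulVec, sqrt_mul_self]

end PosSemidef

end Matrix

/-- profiling out the ridge part of the lava objective. With
`β̂(δ) = (XᵀX + nλ₂I)⁻¹Xᵀ(Y − Xδ)` and `K = I − X(XᵀX + nλ₂I)⁻¹Xᵀ` (positive
semidefinite, with psd square root `K^{1/2}`), for every `δ`: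
`‖Y − X(β̂(δ) + δ)‖₂² + nλ₂‖β̂(δ)‖₂² = ‖K^{1/2}(Y − Xδ)‖₂²`. -/
theorem lava_profile_identity (n p : ℕ) (hn : 0 < n)
    (X : Matrix (Fin n) (Fin p) ℝ) (Y : Fin n → ℝ) (lam2 : ℝ) (hlam2 : 0 < lam2)
    (K : Matrix (Fin n) (Fin n) ℝ)
    (hK : K = 1 - X * (Xᵀ * X + ((n : ℝ) * lam2) • (1 : Matrix (Fin p) (Fin p) ℝ))⁻¹ * Xᵀ)
    (hKpsd : K.PosSemidef) (δ : Fin p → ℝ) :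
    let Q : Matrix (Fin p) (Fin p) ℝ := Xᵀ * X + ((n : ℝ) * lam2) • (1 : Matrix (Fin p) (Fin p) ℝ)
    let βhat : Fin p → ℝ := Q⁻¹.mulVec (Xᵀ.mulVec (Y - X.mulVec δ))
    (∑ i, (Y i - X.mulVec (βhat + δ) i)^2) + (n : ℝ) * lam2 * (∑ j, (βhat j)^2)
      = ∑ i, (hKpsd.sqrt.mulVec (Y - X.mulVec δ) i)^2 := by
  intro Q βhat
  set r := Y - X *ᵥ δ
  have hβ : βhat = ridgeSolution X (n * lam2) r := rfl
  have hQ : IsUnit Q.det := isUnit_det_transpose_mul_self_add_smul_one X (by positivity)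
  have hresidual : Y - X *ᵥ (βhat + δ) = r - X *ᵥ βhat := by
    rw [mulVec_add, sub_add_eq_sub_sub, sub_right_comm]
  have hKr : r - X *ᵥ βhat = K *ᵥ r := by
    rw [hK, sub_mulVec, one_mulVec, ← mulVec_mulVec, ← mulVec_mulVec]
  calc (∑ i, (Y i - (X *ᵥ (βhat + δ)) i) ^ 2) + n * lam2 * ∑ j, βhat j ^ 2
      = (r - X *ᵥ βhat) ⬝ᵥ (r - X *ᵥ βhat) + n * lam2 * (βhat ⬝ᵥ βhat) := by
        rw [← hresidual, ← sum_sq_eq_dotProduct_self, ← sum_sq_eq_dotProduct_self]; rfl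
    _ = r ⬝ᵥ (K *ᵥ r) := by
        rw [hβ, sub_mulVec_dotProduct_self_add_mul_of_transpose_mulVec_eq
          (transpose_mulVec_sub_mulVec_ridgeSolution X r hQ), ← hβ, hKr]
    _ = ∑ i, ((hKpsd.sqrt *ᵥ r) i) ^ 2 := by
        simpa only [star_trivial, sum_sq_eq_dotProduct_self]
          using (hKpsd.star_sqrt_mulVec_dotProduct r).symm
end

section
/- Let (β̂, δ̂) be the lava solution with active set Ĵ = {j : δ̂_j ≠ 0}, P_Ĵ the orthogonal projection onto the column span of X_Ĵ, K_Ĵ = I_n − P_Ĵ, and Û = Y − X(β̂ + δ̂). Then the post-lava fit satisfies X(β̂ + δ̃) = X(β̂ + δ̂) + P_Ĵ·Û, where δ̃ minimizes ‖Y − Xβ̂ − Xδ‖₂² subject to δ_j = 0 for j ∉ Ĵ. -/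
/-!
Minimising `‖Y - Xβ̂ - Xδ‖` over `δ` supported on `Ĵ` is least squares over the span `S` of the
selected columns, so `Xδ̃` is the orthogonal projection of `Y - Xβ̂` onto `S`. Since `Xδ̂` already
lies in `S`, projecting `Û = (Y - Xβ̂) - Xδ̂` gives `P_Ĵ Û = Xδ̃ - Xδ̂`.
-/

open Matrix

theorem Submodule.starProjection_eq_of_forall_norm_sub_le {𝕜 E : Type*} [RCLike 𝕜]
    [NormedAddCommGroup E] [InnerProductSpace 𝕜 E] {K : Submodule 𝕜 E}
    [K.HasOrthogonalProjection] {u v : E} (hv : v ∈ K) (hmin : ∀ w ∈ K, ‖u - v‖ ≤ ‖u - w‖) :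
    K.starProjection u = v := by
  refine eq_starProjection_of_mem_of_inner_eq_zero hv ((norm_eq_iInf_iff_inner_eq_zero K hv).1 ?_)
  exact le_antisymm (le_ciInf fun w => hmin w w.2)
    (ciInf_le ⟨0, Set.forall_mem_range.2 fun _ => norm_nonneg _⟩ (⟨v, hv⟩ : K))

theorem LinearMap.mem_span_image_single_iff {R M ι : Type*} [Semiring R] [AddCommMonoid M]
    [Module R M] [Fintype ι] [DecidableEq ι] (f : (ι → R) →ₗ[R] M) (J : Set ι) (w : M) :
    w ∈ Submodule.span R ((fun j => f (Pi.single j 1)) '' J) ↔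
      ∃ δ : ι → R, Function.support δ ⊆ J ∧ f δ = w := by
  constructor
  · intro hw
    induction hw using Submodule.span_induction with
    | mem _ hx =>
      obtain ⟨j, hj, rfl⟩ := hx
      exact ⟨Pi.single j 1, Pi.support_single_subset.trans (Set.singleton_subset_iff.2 hj), rfl⟩
    | zero => exact ⟨0, by simp, map_zero f⟩
    | add _ _ _ _ h₁ h₂ =>
      obtain ⟨δ₁, hδ₁, rfl⟩ := h₁
      obtain ⟨δ₂, hδ₂, rfl⟩ := h₂
      exact ⟨δ₁ + δ₂, (Function.support_add _ _).trans (Set.union_subset hδ₁ hδ₂), map_add f _ _⟩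
    | smul r _ _ h =>
      obtain ⟨δ, hδ, rfl⟩ := h
      exact ⟨r • δ, (Function.support_const_smul_subset r δ).trans hδ, map_smul f _ _⟩
  · rintro ⟨δ, hδ, rfl⟩
    rw [← Finset.univ_sum_single δ, map_sum]
    refine Submodule.sum_mem _ fun j _ => ?_
    by_cases hj : j ∈ J
    · rw [← mul_one (δ j), ← smul_eq_mul, Pi.single_smul', map_smul]
      exact Submodule.smul_mem _ _ (Submodule.subset_span ⟨j, hj, rfl⟩)
    · simp [Function.notMem_support.1 (fun h => hj (hδ h))]

theorem Matrix.mem_span_toLp_col_iff {R m ι : Type*} [CommRing R] [Fintype ι]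
    [DecidableEq ι] (p : ENNReal) (X : Matrix m ι R) (J : Set ι) (w : WithLp p (m → R)) :
    w ∈ Submodule.span R {c : WithLp p (m → R) | ∃ j ∈ J, c.ofLp = fun i => X i j} ↔
      ∃ δ : ι → R, Function.support δ ⊆ J ∧ WithLp.toLp p (X *ᵥ δ) = w := by
  let f : (ι → R) →ₗ[R] WithLp p (m → R) :=
    (WithLp.linearEquiv p R (m → R)).symm.toLinearMap ∘ₗ X.mulVecLin
  have hcols : {c : WithLp p (m → R) | ∃ j ∈ J, c.ofLp = fun i => X i j} =
      (fun j => f (Pi.single j 1)) '' J := by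
    ext c
    refine exists_congr fun j => and_congr_right fun _ => ?_
    change _ ↔ WithLp.toLp p (X *ᵥ Pi.single j 1) = c
    rw [mulVec_single_one, eq_comm, WithLp.ext_iff]
    rfl
  rw [hcols]
  exact f.mem_span_image_single_iff J w

/-- the post-lava fit equals the lava fit plus the projection of the
lava residual onto the span of the selected columns:
`X(β̂ + δ̃) = X(β̂ + δ̂) + P_Ĵ Û` where `Û = Y − X(β̂ + δ̂)`, `P_Ĵ` is the orthogonal
projection onto the column span of `X_Ĵ`, `Ĵ = {j : δ̂_j ≠ 0}`, and `δ̃` minimizes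
`‖Y − Xβ̂ − Xδ‖₂²` over `δ` supported on `Ĵ`. -/
theorem post_lava_fit (n p : ℕ)
    (X : Matrix (Fin n) (Fin p) ℝ) (Y : EuclideanSpace ℝ (Fin n))
    (βhat δhat δtil : Fin p → ℝ)
    (hδtil_supp : ∀ j, δhat j = 0 → δtil j = 0)
    (hδtil_min : ∀ δ : Fin p → ℝ, (∀ j, δhat j = 0 → δ j = 0) →
      (∑ i, (Y i - X.mulVec βhat i - X.mulVec δtil i)^2)
        ≤ ∑ i, (Y i - X.mulVec βhat i - X.mulVec δ i)^2) :
    let S : Submodule ℝ (EuclideanSpace ℝ (Fin n)) :=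
      Submodule.span ℝ {c : EuclideanSpace ℝ (Fin n) | ∃ j : Fin p, δhat j ≠ 0 ∧ c = fun i => X i j}
    let Uhat : EuclideanSpace ℝ (Fin n) := WithLp.toLp 2 (fun i => Y i - X.mulVec (βhat + δhat) i)
    (WithLp.toLp 2 (fun i => X.mulVec (βhat + δtil) i) : EuclideanSpace ℝ (Fin n))
      = WithLp.toLp 2 (fun i => X.mulVec (βhat + δhat) i + (Submodule.orthogonalProjection S Uhat : EuclideanSpace ℝ (Fin n)) i) := by
  intro S Uhat
  have hsupp (δ : Fin p → ℝ) :
      (∀ j, δhat j = 0 → δ j = 0) ↔ Function.support δ ⊆ Function.support δhat := by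
    simp [not_imp_not]
  have hmem (w : EuclideanSpace ℝ (Fin n)) :
      w ∈ S ↔ ∃ δ, Function.support δ ⊆ Function.support δhat ∧ WithLp.toLp 2 (X *ᵥ δ) = w :=
    Matrix.mem_span_toLp_col_iff 2 X _ w
  set b : EuclideanSpace ℝ (Fin n) := WithLp.toLp 2 (fun i => Y i - X.mulVec βhat i)
  have hproj : S.starProjection b = WithLp.toLp 2 (X *ᵥ δtil) := by
    refine Submodule.starProjection_eq_of_forall_norm_sub_le
      ((hmem _).2 ⟨δtil, (hsupp δtil).1 hδtil_supp, rfl⟩) fun w hw => ?_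
    obtain ⟨δ, hδ, rfl⟩ := (hmem w).1 hw
    have hsq : ‖b - WithLp.toLp 2 (X *ᵥ δtil)‖ ^ 2 ≤ ‖b - WithLp.toLp 2 (X *ᵥ δ)‖ ^ 2 := by
      rw [EuclideanSpace.real_norm_sq_eq, EuclideanSpace.real_norm_sq_eq]
      exact hδtil_min δ ((hsupp δ).2 hδ)
    exact (pow_le_pow_iff_left₀ (norm_nonneg _) (norm_nonneg _) two_ne_zero).1 hsq
  have hδhat : S.starProjection (WithLp.toLp 2 (X *ᵥ δhat)) = WithLp.toLp 2 (X *ᵥ δhat) :=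
    Submodule.starProjection_eq_self_iff.2 ((hmem _).2 ⟨δhat, subset_rfl, rfl⟩)
  have hUhat : Uhat = b - WithLp.toLp 2 (X *ᵥ δhat) := by
    ext i
    simp only [mulVec_add, Pi.add_apply, PiLp.sub_apply, b, Uhat]
    ring
  change _ = WithLp.toLp 2 (fun i => _ + (S.starProjection Uhat) i)
  rw [hUhat, map_sub, hproj, hδhat]
  ext i
  simp [mulVec_add]
end
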